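/- Let K be a field, λ ∈ K^× an element that is not a root of unity, and g ∈ K⟨⟨e_0,e_1⟩⟩ with g[∅]=1. Let τ(λ) be the grading automorphism multiplying each word of weight n (length n) by λ^n. Then the map ψ: f ↦ g ∘ τ(λ)(f), where ∘ is the Ihara product g ∘ f = g·f(e_0,g^{-1}e_1g), has a unique fixed point in {f : f[∅]=1}. -/

import Mathlib

open Finset

abbrev Word := List (Fin 2)

variable {K : Type*} [Field K]

/-- Multiplication via deconcatenation: `(f·g)[w] = ∑_{w = uv} f[u]·g[v]`. -/
def seriesMul (f g : Word → K) : Word → K :=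
  fun w => ∑ k ∈ Finset.range (w.length + 1), f (w.take k) * g (w.drop k)

/-- The unit series `1`. -/
def seriesOne : Word → K := fun w => if w = [] then 1 else 0

/-- The series `e₁`. -/
def e1Series : Word → K := fun w => if w = [1] then 1 else 0

/-- The multiplicative inverse of a series with constant coefficient `1`. -/
def seriesInv (f : Word → K) : Word → K
  | [] => 1
  | x :: w => -∑ k ∈ Finset.range (w.length + 1), f (x :: w.take k) * seriesInv f (w.drop k)
  termination_by w => w.length
  decreasing_by simp [List.length_drop] <;> omega

/-- Coefficient of the word `w` in the image of the monomial `u` under the continuous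
algebra substitution `e₀ ↦ e₀`, `e₁ ↦ h`. -/
def substCoeff (h : Word → K) : Word → Word → K
  | [], w => if w = [] then 1 else 0
  | a :: u, w =>
    if a = 0 then
      match w with
      | [] => 0
      | b :: w' => if b = 0 then substCoeff h u w' else 0
    else
      ∑ k ∈ Finset.range (w.length + 1), h (w.take k) * substCoeff h u (w.drop k)

/-- The substitution `f(e₀, h)`: substitute `e₀ ↦ e₀`, `e₁ ↦ h` in `f`
(for `h` with zero constant coefficient). -/
def subst (f h : Word → K) : Word → K :=
  fun w => ∑ k ∈ Finset.range (w.length + 1),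
    ∑ u : Fin k → Fin 2, f (List.ofFn u) * substCoeff h (List.ofFn u) w

/-- `Ad_g(e₁) = g⁻¹ e₁ g`. -/
def adE1 (g : Word → K) : Word → K :=
  seriesMul (seriesMul (seriesInv g) e1Series) g

/-- The Ihara (twisted Magnus) product `g ∘ f = g · f(e₀, g⁻¹ e₁ g)`. -/
def ihara (g f : Word → K) : Word → K :=
  seriesMul g (subst f (adE1 g))

/-- The grading automorphism `τ(λ)`, multiplying each word of weight (length) `n` by `λⁿ`. -/
def tauScale (lam : K) (f : Word → K) : Word → K := fun w => lam ^ w.length * f w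

/-! The fixed-point equation is triangular for the weight grading: the coefficient of a word `w`
in `g ∘ τ(λ) f` is `λ^|w| f[w]` plus terms that involve only coefficients of `f` on shorter
words, because `g[∅] = 1` and `g⁻¹e₁g ≡ e₁` modulo words of length `≥ 2`. Since `λ^n ≠ 1` for
`n ≥ 1`, the equation can be solved uniquely weight by weight; in weight `0` it is vacuous,
and the normalisation `f[∅] = 1` takes its place. -/

section Triangular

variable {α : Type*}

def IsTriangular (μ : α → ℕ) (c : α → K) (T : (α → K) → α → K) : Prop :=
  ∀ f f' w, (∀ v, μ v < μ w → f v = f' v) → T f w - c w * f w = T f' w - c w * f' w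

/-- Solves `(1 - c w) f w = T f w - c w * f w` index by index: the right side only sees `f`
below `w`, so it may be evaluated at the truncation of `f` to smaller indices. -/
noncomputable def triangularFixedPoint (μ : α → ℕ) (c : α → K) (T : (α → K) → α → K) :
    α → K
  | w => T (fun v => if μ v < μ w then triangularFixedPoint μ c T v else 0) w / (1 - c w)
  termination_by w => μ w

variable {μ : α → ℕ} {c : α → K} {T : (α → K) → α → K}

theorem IsTriangular.apply_triangularFixedPoint (hT : IsTriangular μ c T)
    (hc : ∀ w, c w ≠ 1) : T (triangularFixedPoint μ c T) = triangularFixedPoint μ c T := by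
  funext w
  have hF : triangularFixedPoint μ c T w * (1 - c w)
      = T (fun v => if μ v < μ w then triangularFixedPoint μ c T v else 0) w := by
    rw [← eq_div_iff (sub_ne_zero.mpr (hc w).symm), triangularFixedPoint]
  have hdiag := hT (triangularFixedPoint μ c T)
    (fun v => if μ v < μ w then triangularFixedPoint μ c T v else 0) w fun v hv => by simp [hv]
  simp only [lt_irrefl, if_false, mul_zero, sub_zero] at hdiag
  linear_combination hdiag - hF

theorem IsTriangular.eq_of_apply_eq_self (hT : IsTriangular μ c T) (hc : ∀ w, c w ≠ 1)
    {f f' : α → K} (hf : T f = f) (hf' : T f' = f') : f = f' := by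
  funext w
  induction hw : μ w using Nat.strong_induction_on generalizing w with
  | _ n ih =>
    have hdiag := hT f f' w fun v hv => ih (μ v) (hw ▸ hv) v rfl
    rw [hf, hf'] at hdiag
    have : (1 - c w) * (f w - f' w) = 0 := by linear_combination hdiag
    exact sub_eq_zero.mp ((mul_eq_zero.mp this).resolve_left (sub_ne_zero.mpr (hc w).symm))

theorem IsTriangular.existsUnique_apply_eq_self (hT : IsTriangular μ c T)
    (hc : ∀ w, c w ≠ 1) : ∃! f, T f = f :=
  ⟨_, hT.apply_triangularFixedPoint hc, fun _ hf => hT.eq_of_apply_eq_self hc hf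
    (hT.apply_triangularFixedPoint hc)⟩

theorem IsTriangular.update [DecidableEq α] (hT : IsTriangular μ c T) (a : α) (b : K) :
    IsTriangular μ (Function.update c a 0) (fun f => Function.update (T f) a b) := by
  intro f f' w hff
  rcases eq_or_ne w a with rfl | hw
  · simp
  · simpa [Function.update_of_ne hw] using hT f f' w hff

/-- At an index `a` where `T` acts as the identity, the value of a fixed point can be
prescribed: replacing `T f` by `b` at `a` gives a triangular operator with diagonal `0` at `a`. -/
theorem IsTriangular.existsUnique_apply_eq_self_of_apply_eq [DecidableEq α]
    (hT : IsTriangular μ c T) (a : α) (b : K) (hc : ∀ w ≠ a, c w ≠ 1)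
    (hTa : ∀ f, T f a = f a) : ∃! f, f a = b ∧ T f = f := by
  have hc' : ∀ w, Function.update c a 0 w ≠ 1 := fun w => by
    rcases eq_or_ne w a with rfl | hw
    · simp
    · simpa [Function.update_of_ne hw] using hc w hw
  have hfix : ∀ f, Function.update (T f) a b = f ↔ f a = b ∧ T f = f := fun f => by
    rw [Function.update_eq_iff, funext_iff]
    refine ⟨fun ⟨hb, hT'⟩ => ⟨hb.symm, fun w => ?_⟩, fun ⟨hb, hT'⟩ => ⟨hb.symm, fun w _ => hT' w⟩⟩
    rcases eq_or_ne w a with rfl | hw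
    exacts [hTa f, hT' w hw]
  simpa only [hfix] using (hT.update a b).existsUnique_apply_eq_self hc'

end Triangular

lemma seriesMul_nil (f g : Word → K) : seriesMul f g [] = f [] * g [] := by
  simp [seriesMul]

lemma seriesMul_singleton (f g : Word → K) (a : Fin 2) :
    seriesMul f g [a] = f [] * g [a] + f [a] * g [] := by
  simp [seriesMul, Finset.sum_range_succ]

lemma adE1_nil (g : Word → K) : adE1 g [] = 0 := by
  simp [adE1, seriesMul_nil, seriesInv, e1Series]

lemma adE1_singleton (g : Word → K) (hg : g [] = 1) (a : Fin 2) :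
    adE1 g [a] = if a = 1 then 1 else 0 := by
  have hinv : seriesInv g [] = (1 : K) := by rw [seriesInv]
  simp [adE1, seriesMul_singleton, seriesMul_nil, e1Series, hg, hinv]

section substCoeff

variable {h : Word → K}

lemma substCoeff_zero_cons (u : Word) (b : Fin 2) (w : Word) :
    substCoeff h (0 :: u) (b :: w) = if b = 0 then substCoeff h u w else 0 := rfl

lemma substCoeff_one_cons (u w : Word) :
    substCoeff h (1 :: u) w
      = ∑ k ∈ Finset.range (w.length + 1), h (w.take k) * substCoeff h u (w.drop k) := rfl

lemma substCoeff_eq_zero_of_length_lt (h0 : h [] = 0) :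
    ∀ u w : Word, w.length < u.length → substCoeff h u w = 0
  | [], _, hw => by simp at hw
  | 0 :: _, [], _ => rfl
  | 0 :: u, b :: w, hw => by
    rw [substCoeff_zero_cons]
    split_ifs
    exacts [substCoeff_eq_zero_of_length_lt h0 u w (by simpa using hw), rfl]
  | 1 :: u, w, hw => by
    rw [substCoeff_one_cons]
    refine Finset.sum_eq_zero fun k hk => ?_
    rcases k with _ | k
    · simp [h0]
    · rw [substCoeff_eq_zero_of_length_lt h0 u _ (by simp at hw hk ⊢; omega), mul_zero]

lemma substCoeff_eq_ite_of_length_eq (h0 : h [] = 0)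
    (h1 : ∀ a : Fin 2, h [a] = if a = 1 then 1 else 0) :
    ∀ u w : Word, u.length = w.length → substCoeff h u w = if u = w then 1 else 0
  | [], [], _ => rfl
  | [], _ :: _, hw | _ :: _, [], hw => by simp at hw
  | 0 :: u, b :: w, hw => by
    rw [substCoeff_zero_cons, substCoeff_eq_ite_of_length_eq h0 h1 u w (by simpa using hw)]
    rcases Fin.exists_fin_two.mp ⟨b, rfl⟩ with rfl | rfl <;> simp [eq_comm]
  | 1 :: u, b :: w, hw => by
    have hlen : u.length = w.length := by simpa using hw
    rw [substCoeff_one_cons, Finset.sum_eq_single 1]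
    · rw [List.take_succ_cons, List.take_zero, List.drop_one, List.tail_cons, h1 b,
        substCoeff_eq_ite_of_length_eq h0 h1 u w hlen]
      rcases Fin.exists_fin_two.mp ⟨b, rfl⟩ with rfl | rfl <;> simp [eq_comm]
    · intro k hk hk1
      rcases k with _ | k
      · simp [h0]
      · rw [substCoeff_eq_zero_of_length_lt h0 u _ (by simp at hk ⊢; omega), mul_zero]
    · simp

end substCoeff

lemma subst_nil (f h : Word → K) : subst f h [] = f [] := by
  simp [subst, substCoeff]

lemma subst_congr_of_length_le {h : Word → K} {f f' : Word → K} {w : Word}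
    (hff : ∀ v : Word, v.length ≤ w.length → f v = f' v) : subst f h w = subst f' h w := by
  refine Finset.sum_congr rfl fun k hk => Finset.sum_congr rfl fun u _ => ?_
  rw [hff _ (by simp at hk ⊢; omega)]

lemma subst_eq_add_sum_range_length {h : Word → K} (h0 : h [] = 0)
    (h1 : ∀ a : Fin 2, h [a] = if a = 1 then 1 else 0) (f : Word → K) (w : Word) :
    subst f h w = f w + ∑ k ∈ Finset.range w.length,
      ∑ u : Fin k → Fin 2, f (List.ofFn u) * substCoeff h (List.ofFn u) w := by
  rw [subst, Finset.sum_range_succ, add_comm, Fintype.sum_eq_single w.get]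
  · rw [substCoeff_eq_ite_of_length_eq h0 h1 _ _ (by simp), List.ofFn_get]
    simp
  · intro u hu
    rw [substCoeff_eq_ite_of_length_eq h0 h1 _ _ (by simp), if_neg, mul_zero]
    intro hw
    exact hu (List.ofFn_inj.mp (hw.trans (List.ofFn_get w).symm))

lemma ihara_nil (g f : Word → K) : ihara g f [] = g [] * f [] := by
  rw [ihara, seriesMul_nil, subst_nil]

/-- In `(g ∘ τ(λ) f)[w] = ∑_{w = uv} g[u] · (τ(λ) f)(e₀, g⁻¹e₁g)[v]`, the term `u = ∅`
contributes `λ^|w| f[w]` plus words shorter than `w`, and every other term only sees `f`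
on words shorter than `w`. -/
theorem ihara_tauScale_isTriangular (lam : K) (g : Word → K) (hg : g [] = 1) :
    IsTriangular List.length (fun w => lam ^ w.length) (fun f => ihara g (tauScale lam f)) := by
  intro f f' w hff
  have hlow : ∀ k ∈ Finset.range w.length,
      (∑ u : Fin k → Fin 2, tauScale lam f (List.ofFn u) * substCoeff (adE1 g) (List.ofFn u) w)
        = ∑ u : Fin k → Fin 2,
          tauScale lam f' (List.ofFn u) * substCoeff (adE1 g) (List.ofFn u) w :=
    fun k hk => Finset.sum_congr rfl fun u _ => by
      rw [tauScale, tauScale, hff _ (by simpa using hk)]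
  have hhigh : ∀ k ∈ Finset.range w.length,
      g (w.take (k + 1)) * subst (tauScale lam f) (adE1 g) (w.drop (k + 1))
        = g (w.take (k + 1)) * subst (tauScale lam f') (adE1 g) (w.drop (k + 1)) :=
    fun k hk => congrArg _ <| subst_congr_of_length_le fun v hv => by
      rw [tauScale, tauScale, hff v (by simp at hk hv ⊢; omega)]
  simp only [ihara, seriesMul]
  rw [Finset.sum_range_succ', Finset.sum_range_succ', Finset.sum_congr rfl hhigh]
  simp only [List.take_zero, List.drop_zero, hg, one_mul]
  rw [subst_eq_add_sum_range_length (adE1_nil g) (adE1_singleton g hg),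
    subst_eq_add_sum_range_length (adE1_nil g) (adE1_singleton g hg),
    Finset.sum_congr rfl hlow, tauScale, tauScale]
  ring

theorem ihara_tau_contraction_fixed_point_general {K : Type*} [Field K]
    (lam : K) (hlam : ∀ n : ℕ, 0 < n → lam ^ n ≠ 1)
    (g : Word → K) (hg : g [] = 1) :
    ∃! f : Word → K, f [] = 1 ∧ ihara g (tauScale lam f) = f :=
  (ihara_tauScale_isTriangular lam g hg).existsUnique_apply_eq_self_of_apply_eq [] 1
    (fun w hw => hlam _ (List.length_pos_iff.mpr hw))
    (fun f => by simp [ihara_nil, hg, tauScale])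

/-- If `λ ∈ K^×` is not a root of unity and `g` has constant coefficient `1`, then the
map `f ↦ g ∘ τ(λ)(f)` (with `∘` the Ihara product) has a unique fixed point among the
series with constant coefficient `1`. -/
theorem ihara_tau_contraction_fixed_point {K : Type*} [Field K]
    (lam : K) (hlam0 : lam ≠ 0) (hlam : ∀ n : ℕ, 0 < n → lam ^ n ≠ 1)
    (g : Word → K) (hg : g [] = 1) :
    ∃! f : Word → K, f [] = 1 ∧ ihara g (tauScale lam f) = f :=
  ihara_tau_contraction_fixed_point_general lam hlam g hg
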